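/- arXiv:2111.08216 — 3 statements merged into one kernel-verified Lean document; each statement's English description precedes it below -/
import Mathlib

section
/- For all positive integers m, the sum over k from 1 to m of ψ₀(m+1+k)/k equals ψ₀(m+1)² − ψ₀(1)·ψ₀(m+1) − ψ₁(m+1)/2 + ψ₁(1)/2, where ψ₀ is the digamma function and ψ₁ the trigamma function. -/
open Finset

/-- The digamma function ψ₀ = (log ∘ Γ)'. -/
noncomputable def digamma (x : ℝ) : ℝ := deriv (fun y : ℝ => Real.log (Real.Gamma y)) x

/-- The trigamma function ψ₁ = ψ₀'. -/
noncomputable def trigamma (x : ℝ) : ℝ := deriv digamma x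

open Real Set Filter Topology

lemma analyticOnNhd_logGamma :
    AnalyticOnNhd ℝ (fun y : ℝ => Real.log (Real.Gamma y)) (Set.Ioi 0) := by
  intro x hx
  have hx' : (0:ℝ) < x := hx
  have hGam : AnalyticAt ℂ Complex.Gamma (x : ℂ) := by
    apply DifferentiableOn.analyticAt (s := {s : ℂ | 0 < s.re})
    · intro s hs
      refine (Complex.differentiableAt_Gamma s fun m => ?_).differentiableWithinAt
      intro h
      rw [h] at hs
      simp only [Set.mem_setOf_eq, Complex.neg_re, Complex.natCast_re] at hs
      have : (0:ℝ) ≤ m := m.cast_nonneg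
      linarith
    · exact (isOpen_lt continuous_const Complex.continuous_re).mem_nhds (by simpa using hx')
  have hlog : AnalyticAt ℂ Complex.log (Complex.Gamma (x : ℂ)) := by
    apply analyticAt_clog
    rw [Complex.Gamma_ofReal]
    exact Complex.ofReal_mem_slitPlane.2 (Real.Gamma_pos_of_pos hx')
  have h1 : AnalyticAt ℝ (fun s : ℂ => Complex.log (Complex.Gamma s)) (x : ℂ) :=
    (hlog.comp hGam).restrictScalars
  have h2 : AnalyticAt ℝ (fun y : ℝ => (y : ℂ)) x := Complex.ofRealCLM.analyticAt x
  have h3 : AnalyticAt ℝ (fun z : ℂ => z.re)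
      ((fun y : ℝ => Complex.log (Complex.Gamma (y : ℂ))) x) := Complex.reCLM.analyticAt _
  have h4 : AnalyticAt ℝ (fun y : ℝ => (Complex.log (Complex.Gamma (y : ℂ))).re) x := by
    exact AnalyticAt.comp (g := fun z : ℂ => z.re)
      (f := fun y : ℝ => Complex.log (Complex.Gamma (y : ℂ))) h3 (h1.comp h2)
  apply h4.congr
  filter_upwards [isOpen_Ioi.eventually_mem hx] with y hy
  rw [Complex.Gamma_ofReal, ← Complex.ofReal_log (Real.Gamma_pos_of_pos hy).le,
    Complex.ofReal_re]

lemma digamma_diff {x : ℝ} (hx : 0 < x) : DifferentiableAt ℝ digamma x :=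
  ((analyticOnNhd_logGamma.deriv_of_isOpen isOpen_Ioi) x hx).differentiableAt

lemma logGamma_diff {x : ℝ} (hx : 0 < x) :
    DifferentiableAt ℝ (fun y : ℝ => Real.log (Real.Gamma y)) x :=
  (analyticOnNhd_logGamma x hx).differentiableAt

lemma digamma_rec {x : ℝ} (hx : 0 < x) : digamma (x + 1) = digamma x + x⁻¹ := by
  have h_rec : ∀ y : ℝ, 0 < y →
      Real.log (Real.Gamma (y + 1)) = Real.log (Real.Gamma y) + Real.log y := fun y hy => by
    rw [Real.Gamma_add_one hy.ne', Real.log_mul hy.ne' (Real.Gamma_pos_of_pos hy).ne', add_comm]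
  unfold digamma
  rw [← deriv_comp_add_const, ← Real.deriv_log,
    ← deriv_add (logGamma_diff hx) (Real.differentiableAt_log hx.ne')]
  apply Filter.EventuallyEq.deriv_eq
  filter_upwards [eventually_gt_nhds hx] using h_rec

lemma trigamma_rec {x : ℝ} (hx : 0 < x) : trigamma (x + 1) = trigamma x - (x ^ 2)⁻¹ := by
  unfold trigamma
  rw [← deriv_comp_add_const, sub_eq_add_neg, ← deriv_inv,
    ← deriv_add (digamma_diff hx) (differentiableAt_inv hx.ne')]
  apply Filter.EventuallyEq.deriv_eq
  filter_upwards [eventually_gt_nhds hx] with y hy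
  exact digamma_rec hy

noncomputable def Hs (n : ℕ) : ℝ := ∑ k ∈ Finset.range n, ((k : ℝ) + 1)⁻¹
noncomputable def Gs (n : ℕ) : ℝ := ∑ k ∈ Finset.range n, (((k : ℝ) + 1) ^ 2)⁻¹

lemma Hs_succ (n : ℕ) : Hs (n + 1) = Hs n + ((n : ℝ) + 1)⁻¹ := by
  rw [Hs, Finset.sum_range_succ]; rfl

lemma Gs_succ (n : ℕ) : Gs (n + 1) = Gs n + (((n : ℝ) + 1) ^ 2)⁻¹ := by
  rw [Gs, Finset.sum_range_succ]; rfl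

lemma digamma_nat (n : ℕ) : digamma ((n : ℝ) + 1) = digamma 1 + Hs n := by
  induction n with
  | zero => simp [Hs]
  | succ n ih =>
    have h := digamma_rec (x := (n : ℝ) + 1) (by positivity)
    push_cast
    rw [show (n : ℝ) + 1 + 1 = ((n : ℝ) + 1) + 1 by ring, h, ih, Hs_succ]
    ring

lemma trigamma_nat (n : ℕ) : trigamma ((n : ℝ) + 1) = trigamma 1 - Gs n := by
  induction n with
  | zero => simp [Gs]
  | succ n ih =>
    have h := trigamma_rec (x := (n : ℝ) + 1) (by positivity)
    push_cast
    rw [show (n : ℝ) + 1 + 1 = ((n : ℝ) + 1) + 1 by ring, h, ih, Gs_succ]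
    ring

lemma Hs_add (a b : ℕ) : Hs (a + b) = Hs a + ∑ k ∈ Finset.range b, ((a : ℝ) + k + 1)⁻¹ := by
  rw [Hs, Finset.sum_range_add, ← Hs]
  congr 1
  refine Finset.sum_congr rfl fun k _ => ?_
  push_cast
  ring_nf

lemma key (m : ℕ) :
    ∑ k ∈ Finset.range m, Hs (m + k + 1) / ((k : ℝ) + 1) = Hs m ^ 2 + Gs m / 2 := by
  induction m with
  | zero => simp [Hs, Gs]
  | succ m ih =>
    have h1 : ((m : ℝ) + 1) ≠ 0 := by positivity
    rw [Finset.sum_range_succ]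
    have e1 : ∑ k ∈ Finset.range m, Hs (m + 1 + k + 1) / ((k : ℝ) + 1)
        = ∑ k ∈ Finset.range m, (Hs (m + k + 1) / ((k : ℝ) + 1)
            + ((m : ℝ) + 1)⁻¹ * (((k : ℝ) + 1)⁻¹ - ((m : ℝ) + (k : ℝ) + 2)⁻¹)) := by
      refine Finset.sum_congr rfl fun k _ => ?_
      rw [show m + 1 + k + 1 = (m + k + 1) + 1 by ring, Hs_succ]
      have hk : ((k : ℝ) + 1) ≠ 0 := by positivity
      have h2 : ((m : ℝ) + (k : ℝ) + 2) ≠ 0 := by positivity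
      have hcast : ((m + k + 1 : ℕ) : ℝ) + 1 = (m : ℝ) + (k : ℝ) + 2 := by push_cast; ring
      rw [hcast]
      field_simp
      ring
    rw [e1, Finset.sum_add_distrib, ih, ← Finset.mul_sum, Finset.sum_sub_distrib, ← Hs]
    set X : ℝ := ∑ k ∈ Finset.range m, ((m : ℝ) + (k : ℝ) + 2)⁻¹ with hX
    have hbig : Hs (m + 1 + m + 1) = Hs m + ((m : ℝ) + 1)⁻¹ + X + ((m : ℝ) + (m : ℝ) + 2)⁻¹ := by
      rw [show m + 1 + m + 1 = (m + 1) + (m + 1) by ring, Hs_add, Hs_succ,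
        Finset.sum_range_succ, hX]
      have : ∀ k ∈ Finset.range m, (((m + 1 : ℕ) : ℝ) + k + 1)⁻¹ = ((m : ℝ) + (k : ℝ) + 2)⁻¹ := by
        intro k _; push_cast; ring_nf
      rw [Finset.sum_congr rfl this]
      push_cast
      ring
    rw [hbig, Hs_succ, Gs_succ]
    field_simp
    ring

theorem sum_digamma_add_div (m : ℕ) (hm : 0 < m) :
    ∑ k ∈ Finset.Icc 1 m, digamma ((m : ℝ) + 1 + k) / k =
      digamma ((m : ℝ) + 1) ^ 2 - digamma 1 * digamma ((m : ℝ) + 1)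
        - trigamma ((m : ℝ) + 1) / 2 + trigamma 1 / 2 := by
  rw [← Finset.Ico_add_one_right_eq_Icc, Finset.sum_Ico_eq_sum_range]
  simp only [Nat.add_sub_cancel]
  have e1 : ∀ i ∈ Finset.range m, digamma ((m : ℝ) + 1 + (1 + i : ℕ)) / ((1 + i : ℕ) : ℝ)
      = (digamma 1 + Hs (m + i + 1)) / ((i : ℝ) + 1) := by
    intro i _
    have : (m : ℝ) + 1 + ((1 + i : ℕ) : ℝ) = ((m + i + 1 : ℕ) : ℝ) + 1 := by push_cast; ring
    rw [this, digamma_nat]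
    congr 1
    push_cast
    ring
  rw [Finset.sum_congr rfl e1]
  have e2 : ∑ i ∈ Finset.range m, (digamma 1 + Hs (m + i + 1)) / ((i : ℝ) + 1)
      = digamma 1 * Hs m + ∑ i ∈ Finset.range m, Hs (m + i + 1) / ((i : ℝ) + 1) := by
    have hsplit : ∀ i ∈ Finset.range m, (digamma 1 + Hs (m + i + 1)) / ((i : ℝ) + 1)
        = digamma 1 * ((i : ℝ) + 1)⁻¹ + Hs (m + i + 1) / ((i : ℝ) + 1) := fun i _ => by
      rw [add_div, div_eq_mul_inv]
    rw [Finset.sum_congr rfl hsplit, Finset.sum_add_distrib, ← Finset.mul_sum, ← Hs]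
  rw [e2, key, digamma_nat, trigamma_nat]
  ring
end

section
/- Let m, b, c be as follows: m a positive integer, c > 0, b ≥ 0. Then Σ_{k=0}^{m} ψ₀(m+b+1−k)/(Γ(k+1)·Γ(c+k)·Γ(m+1−k)·Γ(m+b+1−k)) = Γ(b+c+2m)·(ψ₀(b+c+m) − ψ₀(b+c+2m) + ψ₀(b+m+1))/(Γ(m+1)·Γ(b+m+1)·Γ(c+m)·Γ(b+c+m)). -/
open Finset

open Polynomial in
lemma desc_vandermonde (m : ℕ) (x y : ℝ) :
    (descPochhammer ℝ m).eval (x + y) =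
      ∑ k ∈ range (m + 1), (m.choose k : ℝ) * (descPochhammer ℝ k).eval x *
        (descPochhammer ℝ (m - k)).eval y := by
  induction m with
  | zero => simp
  | succ m ih =>
    have hsplit : ∀ k ∈ range (m + 1),
        (m.choose k : ℝ) * (descPochhammer ℝ k).eval x * (descPochhammer ℝ (m - k)).eval y
          * (x + y - m)
        = (m.choose k : ℝ) * (descPochhammer ℝ (k+1)).eval x * (descPochhammer ℝ (m - k)).eval y
          + (m.choose k : ℝ) * (descPochhammer ℝ k).eval x *
            (descPochhammer ℝ (m - k + 1)).eval y := by
      intro k hk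
      rw [mem_range] at hk
      rw [descPochhammer_succ_eval, descPochhammer_succ_eval]
      have : ((m - k : ℕ) : ℝ) = (m : ℝ) - k := by
        rw [Nat.cast_sub (Nat.lt_succ_iff.mp hk)]
      rw [this]
      ring
    have lhs_eq : (descPochhammer ℝ (m+1)).eval (x + y)
        = ∑ k ∈ range (m + 1),
            ((m.choose k : ℝ) * (descPochhammer ℝ (k+1)).eval x * (descPochhammer ℝ (m - k)).eval y
          + (m.choose k : ℝ) * (descPochhammer ℝ k).eval x *
            (descPochhammer ℝ (m - k + 1)).eval y) := by
      rw [descPochhammer_succ_eval, ih, sum_mul]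
      exact sum_congr rfl hsplit
    set f : ℕ → ℝ := fun k => (m.choose k : ℝ) * (descPochhammer ℝ k).eval x *
        (descPochhammer ℝ (m + 1 - k)).eval y with hf
    have h2 : ∑ k ∈ range (m + 1),
        (m.choose k : ℝ) * (descPochhammer ℝ k).eval x * (descPochhammer ℝ (m - k + 1)).eval y
      = ∑ k ∈ range (m + 1), (m.choose (k+1) : ℝ) * (descPochhammer ℝ (k+1)).eval x *
          (descPochhammer ℝ (m - k)).eval y + (descPochhammer ℝ (m+1)).eval y := by
      have e1 : ∑ k ∈ range (m+1), (m.choose k : ℝ) * (descPochhammer ℝ k).eval x *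
          (descPochhammer ℝ (m - k + 1)).eval y = ∑ k ∈ range (m+1), f k := by
        refine sum_congr rfl fun k hk => ?_
        rw [mem_range] at hk
        have : m - k + 1 = m + 1 - k := by omega
        rw [hf, this]
      have hf0 : f (m+1) = 0 := by simp [hf, Nat.choose_succ_self]
      have e2 : ∑ k ∈ range (m+1), f k = ∑ k ∈ range (m+2), f k := by
        rw [show m+2 = m+1+1 from rfl]
        conv_rhs => rw [sum_range_succ]
        rw [hf0, add_zero]
      rw [e1, e2, sum_range_succ' f (m+1)]
      congr 1
      · refine sum_congr rfl fun k hk => ?_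
        simp only [hf, Nat.succ_sub_succ]
      · simp [hf]
    rw [lhs_eq, sum_add_distrib, h2]
    rw [sum_range_succ' (fun k => (((m+1).choose k : ℕ) : ℝ) * (descPochhammer ℝ k).eval x *
        (descPochhammer ℝ (m + 1 - k)).eval y) (m+1)]
    simp only [Nat.choose_succ_succ', Nat.cast_add, Nat.choose_zero_right, Nat.cast_one,
      descPochhammer_zero, eval_one, Nat.succ_sub_succ, Nat.sub_zero]
    rw [sum_congr rfl (fun k _ => by ring :
      ∀ k ∈ range (m+1), ((m.choose k : ℝ) + (m.choose (k+1) : ℝ)) *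
        (descPochhammer ℝ (k+1)).eval x * (descPochhammer ℝ (m - k)).eval y
      = (m.choose k : ℝ) * (descPochhammer ℝ (k+1)).eval x * (descPochhammer ℝ (m - k)).eval y
      + (m.choose (k+1) : ℝ) * (descPochhammer ℝ (k+1)).eval x *
          (descPochhammer ℝ (m - k)).eval y), sum_add_distrib]
    ring

open Polynomial in
lemma Gamma_ratio (x : ℝ) (hx : 0 < x) (n : ℕ) :
    Real.Gamma (x + n) = (ascPochhammer ℝ n).eval x * Real.Gamma x := by
  induction n with
  | zero => simp
  | succ n ih =>
    have hxn : x + (n : ℝ) ≠ 0 := by positivity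
    rw [Nat.cast_succ, ← add_assoc, Real.Gamma_add_one hxn, ih, ascPochhammer_succ_eval]
    ring

open Polynomial in
lemma base_id (m : ℕ) (hm : 0 < m) (c b : ℝ) (hc : 0 < c) (hb : -1 < b) :
    ∑ k ∈ range (m + 1), (Real.Gamma ((k:ℝ)+1) * Real.Gamma (c+k) *
        Real.Gamma ((m:ℝ)+1-k))⁻¹ * (Real.Gamma ((m:ℝ)+b+1-k))⁻¹
  = (Real.Gamma ((m:ℝ)+1) * Real.Gamma (c+m))⁻¹ *
      (Real.Gamma (b+c+2*m) * ((Real.Gamma (b+m+1))⁻¹ * (Real.Gamma (b+c+m))⁻¹)) := by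
  have key : ∀ k ∈ range (m+1),
      (Real.Gamma ((k:ℝ)+1) * Real.Gamma (c+k) * Real.Gamma ((m:ℝ)+1-k))⁻¹ *
        (Real.Gamma ((m:ℝ)+b+1-k))⁻¹
    = (m.choose k : ℝ) * (descPochhammer ℝ k).eval (b+m) *
        (descPochhammer ℝ (m-k)).eval (c+m-1) *
        (Real.Gamma ((m:ℝ)+1) * Real.Gamma (c+m) * Real.Gamma (b+m+1))⁻¹ := by
    intro k hk
    rw [mem_range, Nat.lt_succ_iff] at hk
    have hkm : ((m - k : ℕ) : ℝ) = (m:ℝ) - k := by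
      rw [Nat.cast_sub hk]
    have hA : (0:ℝ) < Real.Gamma ((k:ℝ)+1) := Real.Gamma_pos_of_pos (by positivity)
    have hB : (0:ℝ) < Real.Gamma (c+k) := Real.Gamma_pos_of_pos (by positivity)
    have hCpos : (0:ℝ) < (m:ℝ)+1-(k:ℝ) := by
      have : (k:ℝ) ≤ m := Nat.cast_le.mpr hk
      linarith
    have hC : (0:ℝ) < Real.Gamma ((m:ℝ)+1-k) := Real.Gamma_pos_of_pos hCpos
    have hDpos : (0:ℝ) < (m:ℝ)+b+1-(k:ℝ) := by
      have : (k:ℝ) ≤ m := Nat.cast_le.mpr hk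
      linarith
    have hD : (0:ℝ) < Real.Gamma ((m:ℝ)+b+1-k) := Real.Gamma_pos_of_pos hDpos
    -- h1 : Γ(m+1) = choose * Γ(k+1) * Γ(m+1-k)
    have h1 : Real.Gamma ((m:ℝ)+1) =
        (m.choose k : ℝ) * Real.Gamma ((k:ℝ)+1) * Real.Gamma ((m:ℝ)+1-k) := by
      have e : (m:ℝ)+1-(k:ℝ) = ((m-k:ℕ):ℝ) + 1 := by rw [hkm]; ring
      rw [e, Real.Gamma_nat_eq_factorial, Real.Gamma_nat_eq_factorial,
        Real.Gamma_nat_eq_factorial]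
      exact_mod_cast congrArg (Nat.cast (R := ℝ))
        (Nat.choose_mul_factorial_mul_factorial hk).symm
    -- h2 : Γ(c+m) = desc_{m-k}(c+m-1) * Γ(c+k)
    have h2 : Real.Gamma (c+m) = (descPochhammer ℝ (m-k)).eval (c+m-1) * Real.Gamma (c+k) := by
      have := Gamma_ratio (c+k) (by positivity) (m-k)
      rw [hkm] at this
      rw [show c+(m:ℝ) = c+(k:ℝ)+((m:ℝ)-(k:ℝ)) by ring, this,
        descPochhammer_eval_eq_ascPochhammer, hkm]
      ring_nf
    -- h3 : Γ(b+m+1) = desc_k(b+m) * Γ(m+b+1-k)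
    have h3 : Real.Gamma (b+m+1) =
        (descPochhammer ℝ k).eval (b+m) * Real.Gamma ((m:ℝ)+b+1-k) := by
      have := Gamma_ratio ((m:ℝ)+b+1-k) hDpos k
      rw [show (m:ℝ)+b+1-(k:ℝ)+(k:ℝ) = b+(m:ℝ)+1 by ring] at this
      rw [this, descPochhammer_eval_eq_ascPochhammer]
      ring_nf
    have hbm1 : (0:ℝ) < b+m+1 := by
      have : (0:ℝ) ≤ (m:ℝ) := Nat.cast_nonneg m
      linarith
    have hP : (descPochhammer ℝ k).eval (b+m) ≠ 0 := by
      intro h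
      rw [h, zero_mul] at h3
      exact (Real.Gamma_pos_of_pos hbm1).ne' h3
    have hQ : (descPochhammer ℝ (m-k)).eval (c+m-1) ≠ 0 := by
      intro h
      rw [h, zero_mul] at h2
      exact (Real.Gamma_pos_of_pos (by positivity : (0:ℝ) < c+m)).ne' h2
    have hch : (0:ℝ) < (m.choose k : ℝ) := by
      exact_mod_cast Nat.choose_pos hk
    rw [h1, h2, h3]
    field_simp
  rw [sum_congr rfl key, ← sum_mul, ← desc_vandermonde m (b+m) (c+m-1)]
  have hbcm : (0:ℝ) < b+c+m := by
    have : (1:ℝ) ≤ m := by exact_mod_cast hm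
    linarith
  have h4 : Real.Gamma (b+c+2*m) =
      (descPochhammer ℝ m).eval (b+(m:ℝ)+(c+(m:ℝ)-1)) * Real.Gamma (b+c+m) := by
    have := Gamma_ratio (b+c+m) hbcm m
    rw [show b+c+(m:ℝ)+(m:ℝ) = b+c+2*(m:ℝ) by ring] at this
    rw [this, descPochhammer_eval_eq_ascPochhammer]
    ring_nf
  rw [h4]
  have g1 : (0:ℝ) < Real.Gamma ((m:ℝ)+1) := Real.Gamma_pos_of_pos (by positivity)
  have g2 : (0:ℝ) < Real.Gamma (c+m) := Real.Gamma_pos_of_pos (by positivity)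
  have g3 : (0:ℝ) < Real.Gamma (b+m+1) := Real.Gamma_pos_of_pos (by
    have : (0:ℝ) ≤ (m:ℝ) := Nat.cast_nonneg m
    linarith)
  have g4 : (0:ℝ) < Real.Gamma (b+c+m) := Real.Gamma_pos_of_pos hbcm
  field_simp

lemma hasDerivAt_Gamma {z : ℝ} (hz : 0 < z) :
    HasDerivAt Real.Gamma (digamma z * Real.Gamma z) z := by
  have hne : ∀ n : ℕ, z ≠ -(n : ℝ) := by
    intro n h
    have : (0:ℝ) ≤ (n:ℝ) := n.cast_nonneg
    rw [h] at hz; linarith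
  have hΓ := Real.Gamma_pos_of_pos hz
  have h1 : HasDerivAt Real.Gamma (deriv Real.Gamma z) z :=
    (Real.differentiableAt_Gamma hne).hasDerivAt
  have h2 : HasDerivAt (fun y => Real.log (Real.Gamma y)) (deriv Real.Gamma z / Real.Gamma z) z :=
    h1.log hΓ.ne'
  have h3 : digamma z = deriv Real.Gamma z / Real.Gamma z := by
    rw [digamma, h2.deriv]
  rw [h3, div_mul_cancel₀ _ hΓ.ne']
  exact h1

lemma hasDerivAt_inv_Gamma {z : ℝ} (hz : 0 < z) :
    HasDerivAt (fun y => (Real.Gamma y)⁻¹) (-(digamma z / Real.Gamma z)) z := by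
  have hΓ := Real.Gamma_pos_of_pos hz
  have h := (hasDerivAt_Gamma hz).inv hΓ.ne'
  refine h.congr_deriv ?_
  rw [neg_div, pow_two, mul_div_mul_right _ _ hΓ.ne']

/-- Digamma-weighted Chu–Vandermonde-type gamma sum. -/
theorem sum_digamma_inv_gamma_eq (m : ℕ) (hm : 0 < m) (c b : ℝ) (hc : 0 < c) (hb : 0 ≤ b) :
    ∑ k ∈ Finset.range (m + 1),
        digamma ((m : ℝ) + b + 1 - k) /
          (Real.Gamma (k + 1) * Real.Gamma (c + k) * Real.Gamma ((m : ℝ) + 1 - k) *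
            Real.Gamma ((m : ℝ) + b + 1 - k)) =
      Real.Gamma (b + c + 2 * m) *
          (digamma (b + c + m) - digamma (b + c + 2 * m) + digamma (b + m + 1)) /
        (Real.Gamma ((m : ℝ) + 1) * Real.Gamma (b + m + 1) * Real.Gamma (c + m) *
          Real.Gamma (b + c + m)) := by
  have hm1 : (1:ℝ) ≤ (m:ℝ) := by exact_mod_cast hm
  -- the two sides of the underlying identity, as functions of b
  set F : ℝ → ℝ := fun b' => ∑ k ∈ range (m + 1),
      (Real.Gamma ((k:ℝ)+1) * Real.Gamma (c+k) * Real.Gamma ((m:ℝ)+1-k))⁻¹ *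
        (Real.Gamma ((m:ℝ)+b'+1-k))⁻¹ with hF
  set G : ℝ → ℝ := fun b' => (Real.Gamma ((m:ℝ)+1) * Real.Gamma (c+m))⁻¹ *
      (Real.Gamma (b'+c+2*m) * ((Real.Gamma (b'+m+1))⁻¹ * (Real.Gamma (b'+c+m))⁻¹)) with hG
  -- F and G agree near b
  have hFG : F =ᶠ[nhds b] G := by
    filter_upwards [eventually_gt_nhds (show (-1:ℝ) < b by linarith)] with b' hb'
    exact base_id m hm c b' hc hb'
  -- derivative of F
  have hFd : HasDerivAt F (∑ k ∈ range (m + 1),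
      (Real.Gamma ((k:ℝ)+1) * Real.Gamma (c+k) * Real.Gamma ((m:ℝ)+1-k))⁻¹ *
        (-(digamma ((m:ℝ)+b+1-k) / Real.Gamma ((m:ℝ)+b+1-k)))) b := by
    apply HasDerivAt.fun_sum
    intro k hk
    rw [mem_range, Nat.lt_succ_iff] at hk
    have hkm : (k:ℝ) ≤ m := Nat.cast_le.mpr hk
    have hz : (0:ℝ) < (m:ℝ)+b+1-k := by linarith
    have hinner : HasDerivAt (fun b' : ℝ => (m:ℝ)+b'+1-(k:ℝ)) 1 b := by
      simpa using (((hasDerivAt_id b).const_add ((m:ℝ))).add_const 1).sub_const (k:ℝ)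
    have h := (hasDerivAt_inv_Gamma hz).comp b hinner
    rw [mul_one] at h
    exact h.const_mul _
  -- derivative of G
  have hb2 : (0:ℝ) < b+c+2*m := by linarith
  have hb3 : (0:ℝ) < b+m+1 := by linarith
  have hb4 : (0:ℝ) < b+c+m := by linarith
  have h1 : HasDerivAt (fun b' : ℝ => Real.Gamma (b'+c+2*m))
      (digamma (b+c+2*m) * Real.Gamma (b+c+2*m)) b := by
    have hinner : HasDerivAt (fun b' : ℝ => b'+c+2*(m:ℝ)) 1 b := by
      simpa using ((hasDerivAt_id b).add_const c).add_const (2*(m:ℝ))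
    have h := (hasDerivAt_Gamma hb2).comp b hinner
    rwa [mul_one] at h
  have h2 : HasDerivAt (fun b' : ℝ => (Real.Gamma (b'+m+1))⁻¹)
      (-(digamma (b+m+1) / Real.Gamma (b+m+1))) b := by
    have hinner : HasDerivAt (fun b' : ℝ => b'+(m:ℝ)+1) 1 b := by
      simpa using ((hasDerivAt_id b).add_const (m:ℝ)).add_const 1
    have h := (hasDerivAt_inv_Gamma hb3).comp b hinner
    rwa [mul_one] at h
  have h3 : HasDerivAt (fun b' : ℝ => (Real.Gamma (b'+c+(m:ℝ)))⁻¹)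
      (-(digamma (b+c+m) / Real.Gamma (b+c+m))) b := by
    have hinner : HasDerivAt (fun b' : ℝ => b'+c+(m:ℝ)) 1 b := by
      simpa using ((hasDerivAt_id b).add_const c).add_const (m:ℝ)
    have h := (hasDerivAt_inv_Gamma hb4).comp b hinner
    rwa [mul_one] at h
  have hGd : HasDerivAt G ((Real.Gamma ((m:ℝ)+1) * Real.Gamma (c+m))⁻¹ *
      (digamma (b+c+2*m) * Real.Gamma (b+c+2*m) *
          ((Real.Gamma (b+m+1))⁻¹ * (Real.Gamma (b+c+m))⁻¹) +
        Real.Gamma (b+c+2*m) *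
          ((-(digamma (b+m+1) / Real.Gamma (b+m+1))) * (Real.Gamma (b+c+m))⁻¹ +
            (Real.Gamma (b+m+1))⁻¹ * (-(digamma (b+c+m) / Real.Gamma (b+c+m)))))) b :=
    ((h1.mul (h2.mul h3)).const_mul _)
  have hFd' : HasDerivAt F _ b := hGd.congr_of_eventuallyEq hFG
  have heq := hFd.unique hFd'
  -- now convert
  have gp1 : (0:ℝ) < Real.Gamma ((m:ℝ)+1) := Real.Gamma_pos_of_pos (by positivity)
  have gp2 : (0:ℝ) < Real.Gamma (c+m) := Real.Gamma_pos_of_pos (by positivity)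
  have gp3 : (0:ℝ) < Real.Gamma (b+m+1) := Real.Gamma_pos_of_pos hb3
  have gp4 : (0:ℝ) < Real.Gamma (b+c+m) := Real.Gamma_pos_of_pos hb4
  have lhs_eq : ∑ k ∈ Finset.range (m + 1),
        digamma ((m : ℝ) + b + 1 - k) /
          (Real.Gamma (k + 1) * Real.Gamma (c + k) * Real.Gamma ((m : ℝ) + 1 - k) *
            Real.Gamma ((m : ℝ) + b + 1 - k))
      = -(∑ k ∈ range (m + 1),
      (Real.Gamma ((k:ℝ)+1) * Real.Gamma (c+k) * Real.Gamma ((m:ℝ)+1-k))⁻¹ *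
        (-(digamma ((m:ℝ)+b+1-k) / Real.Gamma ((m:ℝ)+b+1-k)))) := by
    rw [← sum_neg_distrib]
    refine sum_congr rfl fun k hk => ?_
    rw [div_eq_mul_inv, mul_inv, mul_inv]
    ring
  rw [lhs_eq, heq]
  field_simp
  ring
end

section
/- As n → ∞, the quantity E(n)/n tends to (π²−8)/8, where E(n) = a₀(n)·ψ₁(2n) − ψ₁(n)/8 + π²(8n²−4n+1)/(16(4n−1)) + (1−2n)/2 with a₀(n) = −(2n−1)²/(2(4n−1)). -/
open Filter Topology

namespace TGP

open Real Finset

noncomputable def G (m : ℕ) (x : ℝ) : ℝ :=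
  x / (m + 1) - Real.log (x + m + 1) + Real.log (m + 1)

noncomputable def G1 (m : ℕ) (x : ℝ) : ℝ := 1 / (m + 1) - 1 / (x + m + 1)

lemma mpos (m : ℕ) : (0:ℝ) < (m:ℝ) + 1 := by positivity

lemma xm_pos {x : ℝ} (hx : 0 < x) (m : ℕ) : (0:ℝ) < x + m + 1 := by positivity

lemma G_nonneg {x : ℝ} (hx : 0 < x) (m : ℕ) : 0 ≤ G m x := by
  have h1 : (0:ℝ) < (m:ℝ) + 1 := mpos m
  have h2 : (0:ℝ) < x + m + 1 := xm_pos hx m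
  have h3 : Real.log (x + m + 1) - Real.log (m + 1) ≤ x / (m + 1) := by
    rw [← Real.log_div h2.ne' h1.ne']
    have h4 : (0:ℝ) < (x + m + 1) / (m + 1) := by positivity
    calc Real.log ((x + ↑m + 1) / (↑m + 1)) ≤ (x + m + 1) / (m + 1) - 1 :=
          Real.log_le_sub_one_of_pos h4
      _ = x / (m + 1) := by field_simp; ring
  unfold G; linarith

lemma G1_eq {x : ℝ} (hx : 0 < x) (m : ℕ) :
    G1 m x = x / (((m:ℝ) + 1) * (x + m + 1)) := by
  have h1 := (mpos m).ne'
  have h2 := (xm_pos hx m).ne'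
  unfold G1; field_simp; ring

lemma G1_nonneg {x : ℝ} (hx : 0 < x) (m : ℕ) : 0 ≤ G1 m x := by
  rw [G1_eq hx m]
  have := mpos m; have := xm_pos hx m
  positivity

lemma G1_le {x R : ℝ} (hx : 0 < x) (hR : x ≤ R) (m : ℕ) :
    G1 m x ≤ R / ((m:ℝ) + 1) ^ 2 := by
  rw [G1_eq hx m]
  have h1 := mpos m; have h2 := xm_pos hx m
  have hR0 : (0:ℝ) ≤ R := le_trans hx.le hR
  apply div_le_div₀ hR0 hR (by positivity)
  nlinarith

lemma sq_summable : Summable (fun m : ℕ => 1 / ((m:ℝ) + 1) ^ 2) := by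
  have h : Summable (fun n : ℕ => 1 / (n:ℝ) ^ 2) := by
    rw [Real.summable_one_div_nat_pow]; norm_num
  have := (summable_nat_add_iff 1).mpr h
  refine this.congr fun n => ?_
  push_cast; ring_nf

lemma log_factorial (n : ℕ) :
    Real.log (n.factorial : ℝ) = ∑ m ∈ range n, Real.log ((m:ℝ) + 1) := by
  induction n with
  | zero => simp
  | succ n ih =>
    rw [Finset.sum_range_succ, ← ih, Nat.factorial_succ]
    push_cast
    rw [Real.log_mul (by positivity) (by exact_mod_cast Nat.cast_ne_zero.mpr n.factorial_ne_zero)]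
    ring

lemma sum_G_eq {x : ℝ} (n : ℕ) :
    ∑ m ∈ range n, G m x =
      Real.BohrMollerup.logGammaSeq x n + Real.log x
        + x * (((harmonic n : ℚ) : ℝ) - Real.log n) := by
  unfold G Real.BohrMollerup.logGammaSeq
  rw [Finset.sum_range_succ' (fun m => Real.log (x + m)) n, log_factorial]
  push_cast [harmonic]
  simp only [← add_assoc, div_eq_mul_inv, add_zero]
  rw [Finset.sum_add_distrib, Finset.sum_sub_distrib, mul_sub, Finset.mul_sum]
  ring

end TGP
open Real Finset in
lemma TGP.hasSum_G {x : ℝ} (hx : 0 < x) :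
    HasSum (fun m => G m x)
      (Real.log (Real.Gamma x) + Real.log x + x * Real.eulerMascheroniConstant) := by
  have htend : Tendsto (fun n => ∑ m ∈ range n, G m x) atTop
      (𝓝 (Real.log (Real.Gamma x) + Real.log x + x * Real.eulerMascheroniConstant)) := by
    have h1 := Real.BohrMollerup.tendsto_log_gamma hx
    have h2 := Real.tendsto_harmonic_sub_log
    have h3 := (h1.add_const (Real.log x)).add (h2.const_mul x)
    refine h3.congr fun n => ?_
    rw [sum_G_eq]
  have hsummable : Summable (fun m => G m x) := by
    apply summable_of_sum_range_le (c := Real.log (Real.Gamma x) + Real.log x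
      + x * Real.eulerMascheroniConstant) (fun m => G_nonneg hx m)
    intro n
    have hmono : Monotone (fun n => ∑ m ∈ range n, G m x) := by
      intro a b hab
      exact Finset.sum_le_sum_of_subset_of_nonneg (Finset.range_subset_range.mpr hab)
        (fun i _ _ => G_nonneg hx i)
    exact hmono.ge_of_tendsto htend n
  exact (hsummable.hasSum_iff_tendsto_nat).mpr htend

open Real Finset in
lemma TGP.hasDerivAt_G {x : ℝ} (hx : 0 < x) (m : ℕ) :
    HasDerivAt (G m) (G1 m x) x := by
  have hne : x + (m:ℝ) + 1 ≠ 0 := (xm_pos hx m).ne'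
  have h1 : HasDerivAt (fun y : ℝ => y + (m:ℝ) + 1) 1 x :=
    ((hasDerivAt_id x).add_const (m:ℝ)).add_const 1
  have h2 : HasDerivAt (fun y : ℝ => Real.log (y + (m:ℝ) + 1)) (1 / (x + m + 1)) x :=
    h1.log hne
  have h3 : HasDerivAt (fun y : ℝ => y / ((m:ℝ) + 1)) (1 / ((m:ℝ) + 1)) x :=
    (hasDerivAt_id x).div_const _
  exact ((h3.sub h2).add_const _ : _)

open Real Finset in
lemma TGP.hasDerivAt_G1 {x : ℝ} (hx : 0 < x) (m : ℕ) :
    HasDerivAt (G1 m) (1 / (x + m + 1) ^ 2) x := by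
  have hne : x + (m:ℝ) + 1 ≠ 0 := (xm_pos hx m).ne'
  have h1 : HasDerivAt (fun y : ℝ => y + (m:ℝ) + 1) 1 x :=
    ((hasDerivAt_id x).add_const (m:ℝ)).add_const 1
  have h2 : HasDerivAt (fun y : ℝ => 1 / (y + (m:ℝ) + 1)) (-1 / (x + m + 1) ^ 2) x := by
    simpa [one_div, Pi.inv_def] using h1.inv hne
  have h3 := (hasDerivAt_const x (1 / ((m:ℝ) + 1))).sub h2
  have h4 : HasDerivAt (fun y : ℝ => 1 / ((m:ℝ) + 1) - 1 / (y + (m:ℝ) + 1))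
      (1 / (x + m + 1) ^ 2) x := by
    exact h3.congr_deriv (by ring)
  exact h4

open Real Finset in
lemma TGP.summable_G1 {x : ℝ} (hx : 0 < x) : Summable (fun m => G1 m x) := by
  refine Summable.of_nonneg_of_le (fun m => G1_nonneg hx m) (fun m => G1_le hx le_rfl m) ?_
  simpa [div_eq_mul_inv] using sq_summable.mul_left x
open Real Finset in
lemma TGP.digamma_eq {x : ℝ} (hx : 0 < x) :
    digamma x = -x⁻¹ - Real.eulerMascheroniConstant + ∑' m, G1 m x := by
  have hmem : x ∈ Set.Ioo (0:ℝ) (x + 1) := ⟨hx, by linarith⟩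
  have hu : Summable (fun m : ℕ => (x + 1) / ((m:ℝ) + 1) ^ 2) := by
    simpa [div_eq_mul_inv] using sq_summable.mul_left (x + 1)
  have hS : HasDerivAt (fun y => ∑' m, G m y) (∑' m, G1 m x) x := by
    refine hasDerivAt_tsum_of_isPreconnected hu isOpen_Ioo
      (convex_Ioo _ _).isPreconnected (fun m y hy => hasDerivAt_G hy.1 m)
      (fun m y hy => ?_) hmem (hasSum_G hx).summable hmem
    rw [Real.norm_eq_abs, abs_of_nonneg (G1_nonneg hy.1 m)]
    exact G1_le hy.1 hy.2.le m
  have hF : HasDerivAt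
      (fun y => -Real.log y - Real.eulerMascheroniConstant * y + ∑' m, G m y)
      (-x⁻¹ - Real.eulerMascheroniConstant + ∑' m, G1 m x) x := by
    have hlog : HasDerivAt (fun y : ℝ => -Real.log y) (-x⁻¹) x :=
      (Real.hasDerivAt_log hx.ne').neg
    have hlin : HasDerivAt (fun y : ℝ => Real.eulerMascheroniConstant * y)
        Real.eulerMascheroniConstant x := by
      simpa using (hasDerivAt_id x).const_mul Real.eulerMascheroniConstant
    exact (hlog.sub hlin).add hS
  have heq : (fun y : ℝ => Real.log (Real.Gamma y)) =ᶠ[nhds x]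
      (fun y => -Real.log y - Real.eulerMascheroniConstant * y + ∑' m, G m y) := by
    filter_upwards [isOpen_Ioi.mem_nhds (Set.mem_Ioi.mpr hx)] with y hy
    rw [(hasSum_G (Set.mem_Ioi.mp hy)).tsum_eq]
    ring
  rw [digamma, heq.deriv_eq, hF.deriv]

open Real Finset in
lemma TGP.trigamma_eq {x : ℝ} (hx : 0 < x) :
    trigamma x = (x ^ 2)⁻¹ + ∑' m : ℕ, 1 / (x + m + 1) ^ 2 := by
  have hS : HasDerivAt (fun y => ∑' m, G1 m y) (∑' m : ℕ, 1 / (x + m + 1) ^ 2) x := by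
    refine hasDerivAt_tsum_of_isPreconnected sq_summable isOpen_Ioi
      (convex_Ioi _).isPreconnected (fun m y hy => hasDerivAt_G1 hy m)
      (fun m y hy => ?_) (Set.mem_Ioi.mpr hx) (summable_G1 hx) (Set.mem_Ioi.mpr hx)
    have hy0 : (0:ℝ) < y := hy
    have h1 := mpos m
    have h2 := xm_pos hy0 m
    rw [Real.norm_eq_abs, abs_of_nonneg (by positivity)]
    apply div_le_div₀ zero_le_one le_rfl (by positivity)
    nlinarith
  have hF : HasDerivAt
      (fun y : ℝ => -y⁻¹ - Real.eulerMascheroniConstant + ∑' m, G1 m y)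
      ((x ^ 2)⁻¹ + ∑' m : ℕ, 1 / (x + m + 1) ^ 2) x := by
    have hinv : HasDerivAt (fun y : ℝ => -y⁻¹) ((x ^ 2)⁻¹) x := by
      simpa [Pi.neg_def] using (hasDerivAt_inv hx.ne').neg
    exact ((hinv.sub_const _).add hS)
  have heq : digamma =ᶠ[nhds x]
      (fun y : ℝ => -y⁻¹ - Real.eulerMascheroniConstant + ∑' m, G1 m y) := by
    filter_upwards [isOpen_Ioi.mem_nhds (Set.mem_Ioi.mpr hx)] with y hy
    exact digamma_eq (Set.mem_Ioi.mp hy)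
  rw [trigamma, heq.deriv_eq, hF.deriv]
open Real Finset in
lemma TGP.hasSum_tel {x : ℝ} (hx : 0 < x) :
    HasSum (fun m : ℕ => 1 / (x + m) - 1 / (x + m + 1)) (1 / x) := by
  have hpos : ∀ m : ℕ, (0:ℝ) < x + m := fun m => by positivity
  have hnn : ∀ m : ℕ, (0:ℝ) ≤ 1 / (x + m) - 1 / (x + m + 1) := by
    intro m
    have h1 := hpos m
    have h2 : (0:ℝ) < x + m + 1 := by positivity
    rw [sub_nonneg]
    apply div_le_div₀ zero_le_one le_rfl h1
    linarith
  have hps : ∀ n : ℕ, ∑ m ∈ range n, (1 / (x + m) - 1 / (x + m + 1))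
      = 1 / x - 1 / (x + n) := by
    intro n
    have := Finset.sum_range_sub' (fun m : ℕ => 1 / (x + m)) n
    simp only [Nat.cast_zero, add_zero] at this
    rw [← this]
    refine Finset.sum_congr rfl fun m _ => ?_
    push_cast
    ring_nf
  have htend : Tendsto (fun n : ℕ => ∑ m ∈ range n, (1 / (x + m) - 1 / (x + m + 1)))
      atTop (𝓝 (1 / x)) := by
    simp only [hps]
    have h0 : Tendsto (fun n : ℕ => 1 / (x + n)) atTop (𝓝 0) := by
      have ha : Tendsto (fun n : ℕ => x + (n:ℝ)) atTop atTop :=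
        tendsto_atTop_add_const_left _ x tendsto_natCast_atTop_atTop
      simpa [one_div, Pi.inv_def] using ha.inv_tendsto_atTop
    simpa using tendsto_const_nhds.sub h0
  have hsummable : Summable (fun m : ℕ => 1 / (x + m) - 1 / (x + m + 1)) := by
    apply summable_of_sum_range_le (c := 1 / x) hnn
    intro n
    rw [hps]
    have := hpos n
    have : (0:ℝ) ≤ 1 / (x + n) := by positivity
    linarith
  exact hsummable.hasSum_iff_tendsto_nat.mpr htend

open Real Finset in
lemma TGP.trigamma_nonneg {x : ℝ} (hx : 0 < x) : 0 ≤ trigamma x := by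
  rw [trigamma_eq hx]
  have h1 : (0:ℝ) ≤ (x ^ 2)⁻¹ := by positivity
  have h2 : (0:ℝ) ≤ ∑' m : ℕ, 1 / (x + m + 1) ^ 2 :=
    tsum_nonneg fun m => by positivity
  linarith

open Real Finset in
lemma TGP.trigamma_le {x : ℝ} (hx : 0 < x) : trigamma x ≤ (x ^ 2)⁻¹ + 1 / x := by
  rw [trigamma_eq hx]
  have hsum2 : Summable (fun m : ℕ => 1 / (x + m + 1) ^ 2) := by
    refine Summable.of_nonneg_of_le (fun m => by positivity) (fun m => ?_) sq_summable
    have h1 := mpos m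
    apply div_le_div₀ zero_le_one le_rfl (by positivity)
    nlinarith
  have htel := hasSum_tel hx
  have hle : ∑' m : ℕ, 1 / (x + m + 1) ^ 2 ≤ 1 / x := by
    rw [← htel.tsum_eq]
    refine Summable.tsum_le_tsum (fun m => ?_) hsum2 htel.summable
    have h1 : (0:ℝ) < x + m := by positivity
    have h2 : (0:ℝ) < x + m + 1 := by positivity
    have he : 1 / (x + m) - 1 / (x + m + 1) = 1 / ((x + m) * (x + m + 1)) := by
      field_simp; ring
    rw [he]
    apply div_le_div₀ zero_le_one le_rfl (by positivity)
    nlinarith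
  linarith

open Real Finset in
lemma TGP.tendsto_trigamma : Tendsto trigamma atTop (𝓝 0) := by
  apply squeeze_zero' (g := fun x : ℝ => (x ^ 2)⁻¹ + 1 / x)
  · filter_upwards [eventually_gt_atTop (0:ℝ)] with x hx using trigamma_nonneg hx
  · filter_upwards [eventually_gt_atTop (0:ℝ)] with x hx using trigamma_le hx
  · have hp : Tendsto (fun x : ℝ => x ^ 2) atTop atTop := tendsto_pow_atTop (two_ne_zero)
    have h1 : Tendsto (fun x : ℝ => (x ^ 2)⁻¹) atTop (𝓝 0) :=
      tendsto_inv_atTop_zero.comp hp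
    have h2 : Tendsto (fun x : ℝ => 1 / x) atTop (𝓝 0) := by
      simpa [one_div, Pi.inv_def] using tendsto_inv_atTop_zero
    simpa using h1.add h2
/-- Linear growth of the mean entanglement capacity for equal subsystem dimensions. -/
theorem mean_capacity_linear_growth :
    Tendsto
      (fun n : ℕ =>
        (-((2 * (n : ℝ) - 1) ^ 2 / (2 * (4 * (n : ℝ) - 1))) * trigamma (2 * n)
            - trigamma (n) / 8
            + Real.pi ^ 2 * (8 * (n : ℝ) ^ 2 - 4 * n + 1) / (16 * (4 * (n : ℝ) - 1))
            + (1 - 2 * (n : ℝ)) / 2) / (n : ℝ))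
      atTop (𝓝 ((Real.pi ^ 2 - 8) / 8)) := by
  have hinv : Tendsto (fun n : ℕ => ((n : ℝ))⁻¹) atTop (𝓝 0) :=
    tendsto_inv_atTop_zero.comp tendsto_natCast_atTop_atTop
  have t1 : Tendsto (fun n : ℕ => trigamma n) atTop (𝓝 0) :=
    TGP.tendsto_trigamma.comp tendsto_natCast_atTop_atTop
  have t2 : Tendsto (fun n : ℕ => trigamma (2 * n)) atTop (𝓝 0) := by
    refine TGP.tendsto_trigamma.comp ?_
    exact (tendsto_natCast_atTop_atTop).const_mul_atTop two_pos
  have hc : Tendsto (fun n : ℕ => -((2 - (n:ℝ)⁻¹) ^ 2 / (2 * (4 - (n:ℝ)⁻¹))))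
      atTop (𝓝 (-((2 - 0) ^ 2 / (2 * (4 - 0))))) := by
    refine Tendsto.neg (Tendsto.div ?_ ?_ (by norm_num))
    · exact (tendsto_const_nhds.sub hinv).pow 2
    · exact (tendsto_const_nhds.sub hinv).const_mul 2
  have hC : Tendsto (fun n : ℕ =>
      Real.pi ^ 2 * (8 - 4 * (n:ℝ)⁻¹ + ((n:ℝ)⁻¹) ^ 2) / (16 * (4 - (n:ℝ)⁻¹)))
      atTop (𝓝 (Real.pi ^ 2 * (8 - 4 * 0 + 0 ^ 2) / (16 * (4 - 0)))) := by
    refine Tendsto.div ?_ ?_ (by norm_num)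
    · exact tendsto_const_nhds.mul
        ((tendsto_const_nhds.sub (hinv.const_mul 4)).add (hinv.pow 2))
    · exact (tendsto_const_nhds.sub hinv).const_mul 16
  have hD : Tendsto (fun n : ℕ => ((n:ℝ)⁻¹ - 2) / 2) atTop (𝓝 ((0 - 2) / 2)) :=
    (hinv.sub_const 2).div_const 2
  have key := (((hc.mul t2).sub ((hinv.mul t1).div_const 8)).add hC).add hD
  have hval : -((2 - (0:ℝ)) ^ 2 / (2 * (4 - 0))) * 0 - 0 * 0 / 8
      + Real.pi ^ 2 * (8 - 4 * 0 + 0 ^ 2) / (16 * (4 - 0)) + (0 - 2) / 2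
      = (Real.pi ^ 2 - 8) / 8 := by ring
  rw [hval] at key
  refine Tendsto.congr' ?_ key
  filter_upwards [eventually_ge_atTop 1] with n hn
  have h0 : (n : ℝ) ≠ 0 := by
    have : (1:ℝ) ≤ (n:ℝ) := by exact_mod_cast hn
    linarith
  have h4 : 4 * (n : ℝ) - 1 ≠ 0 := by
    have : (1:ℝ) ≤ (n:ℝ) := by exact_mod_cast hn
    linarith
  field_simp
end
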